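/- arXiv:1708.04995 — 2 statements merged into one kernel-verified Lean document; each statement's English description precedes it below -/
import Mathlib

section
/- If $\kappa_1 > 0$ and $\kappa_1 + 4\kappa_2 > 0$, then for every $\xi \in (0, 2\pi]$ the matrix $\widehat{\mathcal{A}}(\xi) = A_0 + e^{-i\xi}A_1 + e^{i\xi}A_1^{\intercal}$ is Hermitian positive semidefinite. -/
open Matrix Complex Real
open scoped ComplexOrder

noncomputable def A0 (M : ℕ) (κ1 κ2 : ℝ) : Matrix (Fin M) (Fin M) ℂ := fun i j =>
  if (i : ℤ) = (j : ℤ) then 2 * ((κ1 : ℂ) + κ2)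
  else if |(i : ℤ) - (j : ℤ)| = 1 then -(κ1 : ℂ)
  else if |(i : ℤ) - (j : ℤ)| = 2 then -(κ2 : ℂ) else 0

noncomputable def A1 (M : ℕ) (κ1 κ2 : ℝ) : Matrix (Fin M) (Fin M) ℂ := fun i j =>
  if (i : ℕ) = 0 ∧ (j : ℕ) = M - 1 then -(κ1 : ℂ)
  else if ((i : ℕ) = 0 ∧ (j : ℕ) = M - 2) ∨ ((i : ℕ) = 1 ∧ (j : ℕ) = M - 1) then -(κ2 : ℂ)
  else 0

noncomputable def Ahat (M : ℕ) (κ1 κ2 ξ : ℝ) : Matrix (Fin M) (Fin M) ℂ :=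
  A0 M κ1 κ2 + Complex.exp (-(ξ : ℂ) * Complex.I) • A1 M κ1 κ2
    + Complex.exp ((ξ : ℂ) * Complex.I) • (A1 M κ1 κ2)ᵀ

noncomputable def q1 (M : ℕ) : Fin M → ℂ := fun _ => (1 / Real.sqrt M : ℝ)

/-!
Let `U` be the cyclic shift of `Fin M` whose wrap-around entry is multiplied by `e^{-iξ}`; it is
unitary, and `Â(ξ) = κ₁ (2 - U - U*) + κ₂ (2 - U² - U*²)`. With `B = 1 - U`, unitarity gives
`2 - U - U* = B*B`, and since `1 - U² = (1 + U) B` with `(1 + U)*(1 + U) = 4 - B*B`, also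
`2 - U² - U*² = 4 B*B - (B²)*B²`. So `Â(ξ)` is `κ₁ B*B + κ₂ (1 - U²)*(1 - U²)` when `κ₂ ≥ 0` and
`(κ₁ + 4κ₂) B*B + (-κ₂) (B²)*B²` when `κ₂ < 0`: a nonnegative combination of Gram matrices.
-/

namespace Matrix

variable {n R : Type*} [DecidableEq n]

def monomialMatrix [Zero R] (σ : Equiv.Perm n) (d : n → R) : Matrix n n R :=
  fun i j => if i = σ j then d j else 0

theorem monomialMatrix_mul [Fintype n] [NonUnitalNonAssocSemiring R] (σ τ : Equiv.Perm n)
    (d e : n → R) :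
    monomialMatrix σ d * monomialMatrix τ e = monomialMatrix (σ * τ) (fun j => d (τ j) * e j) := by
  ext i j
  rw [mul_apply, Finset.sum_eq_single (τ j)]
  · simp only [monomialMatrix, ite_mul, zero_mul, if_true, Equiv.Perm.mul_apply]
    rfl
  · intro k _ hk
    simp [monomialMatrix, hk]
  · simp

theorem conjTranspose_monomialMatrix [AddMonoid R] [StarAddMonoid R] (σ : Equiv.Perm n)
    (d : n → R) :
    (monomialMatrix σ d)ᴴ = monomialMatrix σ⁻¹ (fun j => star (d (σ⁻¹ j))) := by
  ext i j
  simp only [conjTranspose_apply, monomialMatrix, Equiv.Perm.eq_inv_iff_eq]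
  split_ifs with h h' h'
  · subst h; simp
  · exact absurd h.symm h'
  · exact absurd h'.symm h
  · simp

theorem monomialMatrix_mem_unitaryGroup [Fintype n] [CommRing R] [StarRing R]
    (σ : Equiv.Perm n) {d : n → R} (hd : ∀ j, d j ∈ unitary R) :
    monomialMatrix σ d ∈ unitaryGroup n R := by
  refine mem_unitaryGroup_iff'.mpr ?_
  ext i j
  simp [star_eq_conjTranspose, conjTranspose_monomialMatrix, monomialMatrix_mul, monomialMatrix,
    one_apply, hd]

def twistedShift [Zero R] [One R] (M : ℕ) (z : R) : Matrix (Fin M) (Fin M) R :=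
  monomialMatrix (finRotate M) (fun j => if (j : ℕ) + 1 = M then z else 1)

theorem twistedShift_mem_unitaryGroup [CommRing R] [StarRing R] (M : ℕ) {z : R}
    (hz : z ∈ unitary R) : twistedShift M z ∈ unitaryGroup (Fin M) R :=
  monomialMatrix_mem_unitaryGroup _ fun j => by split_ifs <;> simp [hz]

end Matrix

theorem val_finRotate {M : ℕ} (j : Fin M) :
    (finRotate M j : ℕ) = if (j : ℕ) + 1 = M then (0 : ℕ) else j + 1 := by
  cases M with
  | zero => exact j.elim0
  | succ n => rw [coe_finRotate]; simp [Fin.ext_iff]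

section StarRing

variable {R : Type*} [Ring R] [StarRing R] {u : R}

theorem star_one_sub_mul_one_sub (hu : u ∈ unitary R) :
    star (1 - u) * (1 - u) = 2 - u - star u := by
  rw [star_sub, star_one, sub_mul, mul_sub, mul_sub, Unitary.star_mul_self_of_mem hu, one_mul,
    mul_one, one_mul, ← one_add_one_eq_two]
  abel

theorem star_one_add_mul_one_add (hu : u ∈ unitary R) :
    star (1 + u) * (1 + u) = 4 - star (1 - u) * (1 - u) := by
  rw [star_one_sub_mul_one_sub hu, star_add, star_one, add_mul, mul_add, mul_add,
    Unitary.star_mul_self_of_mem hu, one_mul, mul_one, one_mul,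
    show (4 : R) = 2 + 2 by norm_num, ← one_add_one_eq_two]
  abel

theorem star_one_sub_sq_mul_one_sub_sq (hu : u ∈ unitary R) :
    star (1 - u ^ 2) * (1 - u ^ 2) =
      4 • (star (1 - u) * (1 - u)) - star ((1 - u) ^ 2) * (1 - u) ^ 2 := by
  have hfactor : 1 - u ^ 2 = (1 + u) * (1 - u) := by noncomm_ring
  calc star (1 - u ^ 2) * (1 - u ^ 2)
      = star (1 - u) * (star (1 + u) * (1 + u)) * (1 - u) := by
        rw [hfactor, star_mul]; noncomm_ring
    _ = _ := by rw [star_one_add_mul_one_add hu, star_pow]; noncomm_ring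

end StarRing

theorem Matrix.posSemidef_smul_two_sub_add_smul_two_sub_sq {n 𝕜 : Type*} [Fintype n]
    [DecidableEq n] [RCLike 𝕜] {U : Matrix n n 𝕜} (hU : U ∈ unitaryGroup n 𝕜) {a b : ℝ}
    (ha : 0 ≤ a) (hab : 0 ≤ a + 4 * b) :
    (a • (2 - U - Uᴴ) + b • (2 - U ^ 2 - (U ^ 2)ᴴ)).PosSemidef := by
  have hB := star_one_sub_mul_one_sub hU
  have hC := star_one_sub_mul_one_sub (pow_mem hU 2)
  simp only [star_eq_conjTranspose] at hB hC
  rw [← hB, ← hC]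
  rcases le_or_gt 0 b with hb | hb
  · exact ((posSemidef_conjTranspose_mul_self _).smul ha).add
      ((posSemidef_conjTranspose_mul_self _).smul hb)
  · have hsq := star_one_sub_sq_mul_one_sub_sq hU
    simp only [star_eq_conjTranspose] at hsq
    rw [hsq, show a • ((1 - U)ᴴ * (1 - U))
          + b • (4 • ((1 - U)ᴴ * (1 - U)) - ((1 - U) ^ 2)ᴴ * (1 - U) ^ 2)
        = (a + 4 * b) • ((1 - U)ᴴ * (1 - U)) + (-b) • (((1 - U) ^ 2)ᴴ * (1 - U) ^ 2) by module]
    exact ((posSemidef_conjTranspose_mul_self _).smul hab).add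
      ((posSemidef_conjTranspose_mul_self _).smul (by linarith))

theorem A0_add_smul_A1_add_star_smul_transpose {M : ℕ} (hM : 5 ≤ M) (κ1 κ2 : ℝ) (z : ℂ) :
    A0 M κ1 κ2 + z • A1 M κ1 κ2 + star z • (A1 M κ1 κ2)ᵀ =
      κ1 • (2 - twistedShift M z - (twistedShift M z)ᴴ)
        + κ2 • (2 - twistedShift M z ^ 2 - (twistedShift M z ^ 2)ᴴ) := by
  ext i j
  have hi := i.isLt
  have hj := j.isLt
  simp only [A0, A1, twistedShift, pow_two, monomialMatrix_mul, monomialMatrix, Matrix.add_apply,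
    Matrix.sub_apply, Matrix.smul_apply, ofNat_apply, transpose_apply, conjTranspose_apply,
    Equiv.Perm.mul_apply, Fin.ext_iff, val_finRotate, abs_eq (zero_le_one' ℤ),
    abs_eq (by norm_num : (0 : ℤ) ≤ 2), smul_eq_mul, Complex.real_smul,
    apply_ite (star : ℂ → ℂ), star_mul', star_one, star_zero, eq_ite_iff]
  -- Every entry is determined by `i - j` modulo `M`; `M ≥ 5` keeps the nine values below distinct.
  have hcases := em ((i : ℤ) - j ∈ ({0, 1, -1, 2, -2, (M : ℤ) - 1, 1 - (M : ℤ), (M : ℤ) - 2,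
    2 - (M : ℤ)} : Finset ℤ))
  simp only [Finset.mem_insert, Finset.mem_singleton, not_or] at hcases
  obtain (h | h | h | h | h | h | h | h | h) | h := hcases
  all_goals
    simp (disch := omega) only [if_pos, if_neg, Nat.cast_ofNat, Nat.cast_zero]
    (try split_ifs) <;> first | omega | ring

theorem Complex.star_exp_neg_mul_I (ξ : ℝ) :
    star (Complex.exp (-(ξ : ℂ) * Complex.I)) = Complex.exp ((ξ : ℂ) * Complex.I) := by
  rw [Complex.star_def, ← Complex.exp_conj]
  simp

theorem Complex.exp_neg_mul_I_mem_unitary (ξ : ℝ) :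
    Complex.exp (-(ξ : ℂ) * Complex.I) ∈ unitary ℂ := by
  rw [Unitary.mem_iff, Complex.star_exp_neg_mul_I, ← Complex.exp_add, ← Complex.exp_add]
  constructor <;> ring_nf <;> exact Complex.exp_zero

theorem Ahat_posSemidef_general (M : ℕ) (hM : 5 ≤ M) (κ1 κ2 : ℝ)
    (h1 : 0 < κ1) (h2 : 0 < κ1 + 4 * κ2) (ξ : ℝ) :
    (Ahat M κ1 κ2 ξ).PosSemidef := by
  rw [Ahat, ← Complex.star_exp_neg_mul_I, A0_add_smul_A1_add_star_smul_transpose hM]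
  exact posSemidef_smul_two_sub_add_smul_two_sub_sq
    (twistedShift_mem_unitaryGroup M (Complex.exp_neg_mul_I_mem_unitary ξ)) h1.le h2.le

theorem Ahat_posSemidef (M : ℕ) (hM : 5 ≤ M) (κ1 κ2 : ℝ)
    (h1 : 0 < κ1) (h2 : 0 < κ1 + 4 * κ2) (ξ : ℝ) (hξ : ξ ∈ Set.Ioc 0 (2 * Real.pi)) :
    (Ahat M κ1 κ2 ξ).PosSemidef :=
  Ahat_posSemidef_general M hM κ1 κ2 h1 h2 ξ
end

section
/- For every $\xi \in (0, 2\pi]$, $\lambda_j(\xi) = 2\kappa_1(1 - \cos\xi_j') + 2\kappa_2(1 - \cos 2\xi_j') = 0$ for some $j$ only if $\xi = 2\pi$ and $j = 0$; that is, under the stability conditions $\kappa_1 > 0$ and $\kappa_1 + 4\kappa_2 > 0$, the matrix $\widehat{\mathcal{A}}(\xi)$ is invertible for all $\xi \in (0, 2\pi)$, and at $\xi = 2\pi$ has a one-dimensional kernel spanned by the constant vector $\frac{1}{\sqrt{M}}(1,1,\dots,1)^{\intercal}$. -/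
set_option maxHeartbeats 1600000


open Matrix Complex Real

noncomputable def Vext (M : ℕ) (v : Fin M → ℂ) : ℤ → ℂ := fun t =>
  if h : 0 ≤ t ∧ t < (M : ℤ) then v ⟨t.toNat, by omega⟩ else 0

lemma Vext_coe (M : ℕ) (v : Fin M → ℂ) (n : ℕ) (h : n < M) :
    Vext M v (n : ℤ) = v ⟨n, h⟩ := by
  simp only [Vext]
  rw [dif_pos (by omega)]
  congr 1

lemma Vext_zero (M : ℕ) (v : Fin M → ℂ) (t : ℤ) (h : t < 0 ∨ (M:ℤ) ≤ t) :
    Vext M v t = 0 := by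
  simp only [Vext]
  rw [dif_neg (by omega)]

lemma sum_delta (M : ℕ) (v : Fin M → ℂ) (t : ℤ) (c : ℂ) :
    (∑ j : Fin M, if (j : ℤ) = t then c * v j else 0) = c * Vext M v t := by
  by_cases h : 0 ≤ t ∧ t < (M:ℤ)
  · have ht : t.toNat < M := by omega
    rw [Finset.sum_eq_single (⟨t.toNat, ht⟩ : Fin M)]
    · rw [if_pos (by simp; omega)]
      simp only [Vext]
      rw [dif_pos h]
    · intro b _ hb
      rw [if_neg]
      intro hbt
      apply hb
      apply Fin.ext
      show b.val = t.toNat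
      omega
    · intro h'; exact absurd (Finset.mem_univ _) h'
  · rw [Vext_zero M v t (by omega), mul_zero]
    apply Finset.sum_eq_zero
    intro j _
    rw [if_neg]
    have := j.isLt
    intro hj; apply h; omega

lemma sumA0 (M : ℕ) (κ1 κ2 : ℝ) (v : Fin M → ℂ) (i : Fin M) :
    (∑ j : Fin M, A0 M κ1 κ2 i j * v j)
      = 2*((κ1:ℂ)+κ2) * Vext M v (i:ℤ) + (-(κ1:ℂ)) * Vext M v ((i:ℤ)-1)
        + (-(κ1:ℂ)) * Vext M v ((i:ℤ)+1) + (-(κ2:ℂ)) * Vext M v ((i:ℤ)-2)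
        + (-(κ2:ℂ)) * Vext M v ((i:ℤ)+2) := by
  have hpt : ∀ j : Fin M, A0 M κ1 κ2 i j * v j =
      (if (j:ℤ) = (i:ℤ) then (2*((κ1:ℂ)+κ2)) * v j else 0)
      + (if (j:ℤ) = (i:ℤ)-1 then (-(κ1:ℂ)) * v j else 0)
      + (if (j:ℤ) = (i:ℤ)+1 then (-(κ1:ℂ)) * v j else 0)
      + (if (j:ℤ) = (i:ℤ)-2 then (-(κ2:ℂ)) * v j else 0)
      + (if (j:ℤ) = (i:ℤ)+2 then (-(κ2:ℂ)) * v j else 0) := by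
    intro j
    show (if (i : ℤ) = (j : ℤ) then 2 * ((κ1 : ℂ) + κ2)
      else if |(i : ℤ) - (j : ℤ)| = 1 then -(κ1 : ℂ)
      else if |(i : ℤ) - (j : ℤ)| = 2 then -(κ2 : ℂ) else 0) * v j = _
    rcases abs_cases ((i:ℤ) - (j:ℤ)) with ⟨h, h'⟩ | ⟨h, h'⟩ <;> rw [h] <;>
      split_ifs <;> first | (exfalso; omega) | ring
  rw [Finset.sum_congr rfl (fun j _ => hpt j)]
  rw [Finset.sum_add_distrib, Finset.sum_add_distrib, Finset.sum_add_distrib,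
    Finset.sum_add_distrib, sum_delta, sum_delta, sum_delta, sum_delta, sum_delta]

lemma sumA1 (M : ℕ) (hM : 5 ≤ M) (κ1 κ2 : ℝ) (v : Fin M → ℂ) (i : Fin M) :
    (∑ j : Fin M, A1 M κ1 κ2 i j * v j)
      = (if (i:ℕ) = 0 then -(κ1:ℂ) * Vext M v ((M:ℤ)-1) + (-(κ2:ℂ)) * Vext M v ((M:ℤ)-2)
         else if (i:ℕ) = 1 then -(κ2:ℂ) * Vext M v ((M:ℤ)-1) else 0) := by
  by_cases hi0 : (i:ℕ) = 0
  · rw [if_pos hi0]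
    have hpt : ∀ j : Fin M, A1 M κ1 κ2 i j * v j =
        (if (j:ℤ) = (M:ℤ)-1 then (-(κ1:ℂ)) * v j else 0)
        + (if (j:ℤ) = (M:ℤ)-2 then (-(κ2:ℂ)) * v j else 0) := by
      intro j
      show (if (i : ℕ) = 0 ∧ (j : ℕ) = M - 1 then -(κ1 : ℂ)
        else if ((i:ℕ) = 0 ∧ (j:ℕ) = M - 2) ∨ ((i:ℕ) = 1 ∧ (j:ℕ) = M - 1) then -(κ2 : ℂ)
        else 0) * v j = _
      split_ifs <;> first | (exfalso; omega) | ring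
    rw [Finset.sum_congr rfl (fun j _ => hpt j), Finset.sum_add_distrib,
      sum_delta, sum_delta]
  · by_cases hi1 : (i:ℕ) = 1
    · rw [if_neg hi0, if_pos hi1]
      have hpt : ∀ j : Fin M, A1 M κ1 κ2 i j * v j =
          (if (j:ℤ) = (M:ℤ)-1 then (-(κ2:ℂ)) * v j else 0) := by
        intro j
        show (if (i : ℕ) = 0 ∧ (j : ℕ) = M - 1 then -(κ1 : ℂ)
          else if ((i:ℕ) = 0 ∧ (j:ℕ) = M - 2) ∨ ((i:ℕ) = 1 ∧ (j:ℕ) = M - 1) then -(κ2 : ℂ)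
          else 0) * v j = _
        split_ifs <;> first | (exfalso; omega) | ring
      rw [Finset.sum_congr rfl (fun j _ => hpt j), sum_delta]
    · rw [if_neg hi0, if_neg hi1]
      apply Finset.sum_eq_zero
      intro j _
      show (if (i : ℕ) = 0 ∧ (j : ℕ) = M - 1 then -(κ1 : ℂ)
        else if ((i:ℕ) = 0 ∧ (j:ℕ) = M - 2) ∨ ((i:ℕ) = 1 ∧ (j:ℕ) = M - 1) then -(κ2 : ℂ)
        else 0) * v j = 0
      split_ifs <;> first | (exfalso; omega) | ring

lemma sumA1T (M : ℕ) (hM : 5 ≤ M) (κ1 κ2 : ℝ) (v : Fin M → ℂ) (i : Fin M) :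
    (∑ j : Fin M, (A1 M κ1 κ2)ᵀ i j * v j)
      = (if (i:ℕ) = M-1 then -(κ1:ℂ) * Vext M v 0 + (-(κ2:ℂ)) * Vext M v 1
         else if (i:ℕ) = M-2 then -(κ2:ℂ) * Vext M v 0 else 0) := by
  by_cases hi0 : (i:ℕ) = M-1
  · rw [if_pos hi0]
    have hpt : ∀ j : Fin M, (A1 M κ1 κ2)ᵀ i j * v j =
        (if (j:ℤ) = 0 then (-(κ1:ℂ)) * v j else 0)
        + (if (j:ℤ) = 1 then (-(κ2:ℂ)) * v j else 0) := by
      intro j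
      show (if (j : ℕ) = 0 ∧ (i : ℕ) = M - 1 then -(κ1 : ℂ)
        else if ((j:ℕ) = 0 ∧ (i:ℕ) = M - 2) ∨ ((j:ℕ) = 1 ∧ (i:ℕ) = M - 1) then -(κ2 : ℂ)
        else 0) * v j = _
      split_ifs <;> first | (exfalso; omega) | ring
    rw [Finset.sum_congr rfl (fun j _ => hpt j), Finset.sum_add_distrib,
      sum_delta, sum_delta]
  · by_cases hi1 : (i:ℕ) = M-2
    · rw [if_neg hi0, if_pos hi1]
      have hpt : ∀ j : Fin M, (A1 M κ1 κ2)ᵀ i j * v j =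
          (if (j:ℤ) = 0 then (-(κ2:ℂ)) * v j else 0) := by
        intro j
        show (if (j : ℕ) = 0 ∧ (i : ℕ) = M - 1 then -(κ1 : ℂ)
          else if ((j:ℕ) = 0 ∧ (i:ℕ) = M - 2) ∨ ((j:ℕ) = 1 ∧ (i:ℕ) = M - 1) then -(κ2 : ℂ)
          else 0) * v j = _
        split_ifs <;> first | (exfalso; omega) | ring
      rw [Finset.sum_congr rfl (fun j _ => hpt j), sum_delta]
    · rw [if_neg hi0, if_neg hi1]
      apply Finset.sum_eq_zero
      intro j _
      show (if (j : ℕ) = 0 ∧ (i : ℕ) = M - 1 then -(κ1 : ℂ)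
        else if ((j:ℕ) = 0 ∧ (i:ℕ) = M - 2) ∨ ((j:ℕ) = 1 ∧ (i:ℕ) = M - 1) then -(κ2 : ℂ)
        else 0) * v j = 0
      split_ifs <;> first | (exfalso; omega) | ring

lemma row_formula (M : ℕ) (hM : 5 ≤ M) (κ1 κ2 ξ : ℝ) (v : Fin M → ℂ) (i : Fin M) :
    (Ahat M κ1 κ2 ξ *ᵥ v) i =
      2*((κ1:ℂ)+κ2) * Vext M v (i:ℤ) + (-(κ1:ℂ)) * Vext M v ((i:ℤ)-1)
        + (-(κ1:ℂ)) * Vext M v ((i:ℤ)+1) + (-(κ2:ℂ)) * Vext M v ((i:ℤ)-2)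
        + (-(κ2:ℂ)) * Vext M v ((i:ℤ)+2)
      + Complex.exp (-(ξ:ℂ)*Complex.I) *
          (if (i:ℕ) = 0 then -(κ1:ℂ) * Vext M v ((M:ℤ)-1) + (-(κ2:ℂ)) * Vext M v ((M:ℤ)-2)
           else if (i:ℕ) = 1 then -(κ2:ℂ) * Vext M v ((M:ℤ)-1) else 0)
      + Complex.exp ((ξ:ℂ)*Complex.I) *
          (if (i:ℕ) = M-1 then -(κ1:ℂ) * Vext M v 0 + (-(κ2:ℂ)) * Vext M v 1
           else if (i:ℕ) = M-2 then -(κ2:ℂ) * Vext M v 0 else 0) := by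
  simp only [Ahat, Matrix.add_mulVec, Matrix.smul_mulVec, Pi.add_apply, Pi.smul_apply,
    smul_eq_mul]
  rw [show (A0 M κ1 κ2 *ᵥ v) i = ∑ j : Fin M, A0 M κ1 κ2 i j * v j from rfl,
    show (A1 M κ1 κ2 *ᵥ v) i = ∑ j : Fin M, A1 M κ1 κ2 i j * v j from rfl,
    show ((A1 M κ1 κ2)ᵀ *ᵥ v) i = ∑ j : Fin M, (A1 M κ1 κ2)ᵀ i j * v j from rfl,
    sumA0, sumA1 M hM, sumA1T M hM]

lemma sum_identity (m : ℕ) (V : ℤ → ℂ)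
    (hV : ∀ t : ℤ, t < 0 ∨ (m:ℤ)+5 ≤ t → V t = 0) (z w : ℂ) (hzw : z * w = 1)
    (hwz : w = (starRingEnd ℂ) z) (κ1 κ2 : ℝ) :
    (∑ n ∈ Finset.range (m+5), (starRingEnd ℂ) (V n) *
      (2*((κ1:ℂ)+κ2) * V n + (-(κ1:ℂ)) * V ((n:ℤ)-1) + (-(κ1:ℂ)) * V ((n:ℤ)+1)
        + (-(κ2:ℂ)) * V ((n:ℤ)-2) + (-(κ2:ℂ)) * V ((n:ℤ)+2)
        + z * (if n = 0 then -(κ1:ℂ) * V ((m:ℤ)+4) + (-(κ2:ℂ)) * V ((m:ℤ)+3)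
               else if n = 1 then -(κ2:ℂ) * V ((m:ℤ)+4) else 0)
        + w * (if n = m+4 then -(κ1:ℂ) * V 0 + (-(κ2:ℂ)) * V 1
               else if n = m+3 then -(κ2:ℂ) * V 0 else 0)))
    = κ1 * ((∑ k ∈ Finset.range (m+4),
              (starRingEnd ℂ) (V ((k:ℤ)+1) - V k) * (V ((k:ℤ)+1) - V k))
            + (starRingEnd ℂ) (V 0 - z * V ((m:ℤ)+4)) * (V 0 - z * V ((m:ℤ)+4)))
    + κ2 * ((∑ k ∈ Finset.range (m+3),
              (starRingEnd ℂ) (V ((k:ℤ)+2) - V k) * (V ((k:ℤ)+2) - V k))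
            + (starRingEnd ℂ) (V 0 - z * V ((m:ℤ)+3)) * (V 0 - z * V ((m:ℤ)+3))
            + (starRingEnd ℂ) (V 1 - z * V ((m:ℤ)+4)) * (V 1 - z * V ((m:ℤ)+4))) := by
  have e54 : m + 5 = (m+4)+1 := rfl
  have e43 : m + 4 = (m+3)+1 := rfl
  set c := (starRingEnd ℂ) with hc
  -- canonical sums
  have c1 : (∑ n ∈ Finset.range (m+5), c (V n) * V ((n:ℤ)+1))
      = ∑ k ∈ Finset.range (m+4), c (V k) * V ((k:ℤ)+1) := by
    rw [e54, Finset.sum_range_succ, hV (((m+4:ℕ):ℤ)+1) (by omega),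
      mul_zero, add_zero]
  have c2 : (∑ n ∈ Finset.range (m+5), c (V n) * V ((n:ℤ)-1))
      = ∑ k ∈ Finset.range (m+4), c (V ((k:ℤ)+1)) * V k := by
    rw [e54, Finset.sum_range_succ', hV (((0:ℕ):ℤ)-1) (by omega),
      mul_zero, add_zero]
    apply Finset.sum_congr rfl
    intro k _
    rw [show ((k+1:ℕ):ℤ) = (k:ℤ)+1 by push_cast; ring,
      show ((k:ℤ)+1)-1 = (k:ℤ) by ring]
  have c3 : (∑ n ∈ Finset.range (m+5), c (V n) * V ((n:ℤ)+2))
      = ∑ k ∈ Finset.range (m+3), c (V k) * V ((k:ℤ)+2) := by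
    rw [e54, Finset.sum_range_succ, hV (((m+4:ℕ):ℤ)+2) (by omega),
      mul_zero, add_zero, e43, Finset.sum_range_succ,
      hV (((m+3:ℕ):ℤ)+2) (by omega), mul_zero, add_zero]
  have c4 : (∑ n ∈ Finset.range (m+5), c (V n) * V ((n:ℤ)-2))
      = ∑ k ∈ Finset.range (m+3), c (V ((k:ℤ)+2)) * V k := by
    rw [e54, Finset.sum_range_succ', hV (((0:ℕ):ℤ)-2) (by omega),
      mul_zero, add_zero, e43, Finset.sum_range_succ',
      hV (((0+1:ℕ):ℤ)-2) (by omega), mul_zero, add_zero]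
    apply Finset.sum_congr rfl
    intro k _
    rw [show ((k+1+1:ℕ):ℤ) = (k:ℤ)+2 by push_cast; ring,
      show ((k:ℤ)+2)-2 = (k:ℤ) by ring]
  have hIfA : (∑ n ∈ Finset.range (m+5), c (V n) *
      (z * (if n = 0 then -(κ1:ℂ) * V ((m:ℤ)+4) + (-(κ2:ℂ)) * V ((m:ℤ)+3)
            else if n = 1 then -(κ2:ℂ) * V ((m:ℤ)+4) else 0)))
      = c (V 0) * (z * (-(κ1:ℂ) * V ((m:ℤ)+4) + (-(κ2:ℂ)) * V ((m:ℤ)+3)))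
        + c (V 1) * (z * (-(κ2:ℂ) * V ((m:ℤ)+4))) := by
    rw [e54, Finset.sum_range_succ', e43, Finset.sum_range_succ']
    have hz0 : (∑ k ∈ Finset.range (m+3), c (V ((k+1+1:ℕ):ℤ)) *
        (z * (if k+1+1 = 0 then -(κ1:ℂ) * V ((m:ℤ)+4) + (-(κ2:ℂ)) * V ((m:ℤ)+3)
              else if k+1+1 = 1 then -(κ2:ℂ) * V ((m:ℤ)+4) else 0))) = 0 :=
      Finset.sum_eq_zero (fun k _ => by
        rw [if_neg (by omega), if_neg (by omega), mul_zero, mul_zero])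
    rw [hz0, if_pos rfl, if_neg (by omega), if_pos rfl, zero_add]
    push_cast
    ring
  have hIfB : (∑ n ∈ Finset.range (m+5), c (V n) *
      (w * (if n = m+4 then -(κ1:ℂ) * V 0 + (-(κ2:ℂ)) * V 1
            else if n = m+3 then -(κ2:ℂ) * V 0 else 0)))
      = c (V ((m:ℤ)+4)) * (w * (-(κ1:ℂ) * V 0 + (-(κ2:ℂ)) * V 1))
        + c (V ((m:ℤ)+3)) * (w * (-(κ2:ℂ) * V 0)) := by
    rw [e54, Finset.sum_range_succ, e43, Finset.sum_range_succ]
    have hz0 : (∑ x ∈ Finset.range (m+3), c (V (x:ℕ)) *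
        (w * (if x = m+3+1 then -(κ1:ℂ) * V 0 + (-(κ2:ℂ)) * V 1
              else if x = m+3 then -(κ2:ℂ) * V 0 else 0))) = 0 :=
      Finset.sum_eq_zero (fun x hx => by
        rw [Finset.mem_range] at hx
        rw [if_neg (by omega), if_neg (by omega), mul_zero, mul_zero])
    rw [hz0, if_neg (by omega), if_pos rfl, if_pos rfl, zero_add]
    push_cast
    ring
  have hpt : ∀ n : ℕ, c (V (n:ℤ)) *
      (2*((κ1:ℂ)+κ2) * V (n:ℤ) + (-(κ1:ℂ)) * V ((n:ℤ)-1) + (-(κ1:ℂ)) * V ((n:ℤ)+1)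
        + (-(κ2:ℂ)) * V ((n:ℤ)-2) + (-(κ2:ℂ)) * V ((n:ℤ)+2)
        + z * (if n = 0 then -(κ1:ℂ) * V ((m:ℤ)+4) + (-(κ2:ℂ)) * V ((m:ℤ)+3)
               else if n = 1 then -(κ2:ℂ) * V ((m:ℤ)+4) else 0)
        + w * (if n = m+4 then -(κ1:ℂ) * V 0 + (-(κ2:ℂ)) * V 1
               else if n = m+3 then -(κ2:ℂ) * V 0 else 0))
      = 2*((κ1:ℂ)+κ2) * (c (V (n:ℤ)) * V (n:ℤ)) + (-(κ1:ℂ)) * (c (V (n:ℤ)) * V ((n:ℤ)-1))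
        + (-(κ1:ℂ)) * (c (V (n:ℤ)) * V ((n:ℤ)+1)) + (-(κ2:ℂ)) * (c (V (n:ℤ)) * V ((n:ℤ)-2))
        + (-(κ2:ℂ)) * (c (V (n:ℤ)) * V ((n:ℤ)+2))
        + c (V (n:ℤ)) * (z * (if n = 0 then -(κ1:ℂ) * V ((m:ℤ)+4) + (-(κ2:ℂ)) * V ((m:ℤ)+3)
               else if n = 1 then -(κ2:ℂ) * V ((m:ℤ)+4) else 0))
        + c (V (n:ℤ)) * (w * (if n = m+4 then -(κ1:ℂ) * V 0 + (-(κ2:ℂ)) * V 1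
               else if n = m+3 then -(κ2:ℂ) * V 0 else 0)) := fun n => by ring
  rw [Finset.sum_congr rfl (fun n _ => hpt n), Finset.sum_add_distrib,
    Finset.sum_add_distrib, Finset.sum_add_distrib, Finset.sum_add_distrib,
    Finset.sum_add_distrib, Finset.sum_add_distrib, ← Finset.mul_sum, ← Finset.mul_sum,
    ← Finset.mul_sum, ← Finset.mul_sum, ← Finset.mul_sum]
  rw [c1, c2, c3, c4, hIfA, hIfB]
  -- expand the RHS difference sums
  have q1e : ∀ k:ℕ, c (V ((k:ℤ)+1) - V k) * (V ((k:ℤ)+1) - V k)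
      = c (V ((k:ℤ)+1)) * V ((k:ℤ)+1) + c (V k) * V k
        - c (V ((k:ℤ)+1)) * V k - c (V k) * V ((k:ℤ)+1) := fun k => by
    rw [map_sub]; ring
  have q2e : ∀ k:ℕ, c (V ((k:ℤ)+2) - V k) * (V ((k:ℤ)+2) - V k)
      = c (V ((k:ℤ)+2)) * V ((k:ℤ)+2) + c (V k) * V k
        - c (V ((k:ℤ)+2)) * V k - c (V k) * V ((k:ℤ)+2) := fun k => by
    rw [map_sub]; ring
  rw [Finset.sum_congr rfl (fun k _ => q1e k), Finset.sum_congr rfl (fun k _ => q2e k),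
    Finset.sum_sub_distrib, Finset.sum_sub_distrib, Finset.sum_add_distrib,
    Finset.sum_sub_distrib, Finset.sum_sub_distrib, Finset.sum_add_distrib]
  -- partial sums of the diagonal sum
  have ra : (∑ n ∈ Finset.range (m+5), c (V n) * V n)
      = (∑ k ∈ Finset.range (m+4), c (V ((k:ℤ)+1)) * V ((k:ℤ)+1)) + c (V 0) * V 0 := by
    rw [e54, Finset.sum_range_succ']
    push_cast
    rfl
  have rb : (∑ n ∈ Finset.range (m+5), c (V n) * V n)
      = (∑ k ∈ Finset.range (m+4), c (V (k:ℤ)) * V (k:ℤ)) + c (V ((m:ℤ)+4)) * V ((m:ℤ)+4) := by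
    rw [e54, Finset.sum_range_succ]
    push_cast
    rfl
  have rc : (∑ n ∈ Finset.range (m+5), c (V n) * V n)
      = (∑ k ∈ Finset.range (m+3), c (V ((k:ℤ)+2)) * V ((k:ℤ)+2))
        + c (V 1) * V 1 + c (V 0) * V 0 := by
    rw [e54, Finset.sum_range_succ', e43, Finset.sum_range_succ']
    have : ∀ k : ℕ, ((k+1+1:ℕ):ℤ) = (k:ℤ)+2 := fun k => by push_cast; ring
    rw [Finset.sum_congr rfl (fun k _ => by rw [this k])]
    push_cast
    ring
  have rd : (∑ n ∈ Finset.range (m+5), c (V n) * V n)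
      = (∑ k ∈ Finset.range (m+3), c (V (k:ℤ)) * V (k:ℤ))
        + c (V ((m:ℤ)+3)) * V ((m:ℤ)+3) + c (V ((m:ℤ)+4)) * V ((m:ℤ)+4) := by
    rw [e54, Finset.sum_range_succ, e43, Finset.sum_range_succ]
    push_cast
    ring
  have ra' : (∑ k ∈ Finset.range (m+4), c (V ((k:ℤ)+1)) * V ((k:ℤ)+1))
      = (∑ n ∈ Finset.range (m+5), c (V n) * V n) - c (V 0) * V 0 := by rw [ra]; ring
  have rb' : (∑ k ∈ Finset.range (m+4), c (V (k:ℤ)) * V (k:ℤ))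
      = (∑ n ∈ Finset.range (m+5), c (V n) * V n) - c (V ((m:ℤ)+4)) * V ((m:ℤ)+4) := by
    rw [rb]; ring
  have rc' : (∑ k ∈ Finset.range (m+3), c (V ((k:ℤ)+2)) * V ((k:ℤ)+2))
      = (∑ n ∈ Finset.range (m+5), c (V n) * V n) - c (V 1) * V 1 - c (V 0) * V 0 := by
    rw [rc]; ring
  have rd' : (∑ k ∈ Finset.range (m+3), c (V (k:ℤ)) * V (k:ℤ))
      = (∑ n ∈ Finset.range (m+5), c (V n) * V n) - c (V ((m:ℤ)+3)) * V ((m:ℤ)+3)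
        - c (V ((m:ℤ)+4)) * V ((m:ℤ)+4) := by rw [rd]; ring
  rw [ra', rb', rc', rd']
  simp only [map_sub, _root_.map_mul]
  rw [hwz]
  have hzc : z * c z = 1 := by rw [← hwz]; exact hzw
  linear_combination (-1:ℂ) * (κ1 * (c (V ((m:ℤ)+4)) * V ((m:ℤ)+4))
    + κ2 * (c (V ((m:ℤ)+3)) * V ((m:ℤ)+3) + c (V ((m:ℤ)+4)) * V ((m:ℤ)+4))) * hzc

lemma quad_eq (m : ℕ) (κ1 κ2 ξ : ℝ) (v : Fin (m+5) → ℂ) :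
    (∑ i : Fin (m+5), (starRingEnd ℂ) (v i) * (Ahat (m+5) κ1 κ2 ξ *ᵥ v) i)
    = κ1 * ((∑ k ∈ Finset.range (m+4),
              (starRingEnd ℂ) (Vext (m+5) v ((k:ℤ)+1) - Vext (m+5) v k)
                * (Vext (m+5) v ((k:ℤ)+1) - Vext (m+5) v k))
            + (starRingEnd ℂ) (Vext (m+5) v 0
                - Complex.exp (-(ξ:ℂ)*Complex.I) * Vext (m+5) v ((m:ℤ)+4))
              * (Vext (m+5) v 0 - Complex.exp (-(ξ:ℂ)*Complex.I) * Vext (m+5) v ((m:ℤ)+4)))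
    + κ2 * ((∑ k ∈ Finset.range (m+3),
              (starRingEnd ℂ) (Vext (m+5) v ((k:ℤ)+2) - Vext (m+5) v k)
                * (Vext (m+5) v ((k:ℤ)+2) - Vext (m+5) v k))
            + (starRingEnd ℂ) (Vext (m+5) v 0
                - Complex.exp (-(ξ:ℂ)*Complex.I) * Vext (m+5) v ((m:ℤ)+3))
              * (Vext (m+5) v 0 - Complex.exp (-(ξ:ℂ)*Complex.I) * Vext (m+5) v ((m:ℤ)+3))
            + (starRingEnd ℂ) (Vext (m+5) v 1
                - Complex.exp (-(ξ:ℂ)*Complex.I) * Vext (m+5) v ((m:ℤ)+4))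
              * (Vext (m+5) v 1 - Complex.exp (-(ξ:ℂ)*Complex.I) * Vext (m+5) v ((m:ℤ)+4))) := by
  set V := Vext (m+5) v with hV
  set z := Complex.exp (-(ξ:ℂ)*Complex.I) with hzdef
  set w := Complex.exp ((ξ:ℂ)*Complex.I) with hwdef
  have hzw : z * w = 1 := by
    rw [hzdef, hwdef, ← Complex.exp_add]
    norm_num
  have hwz : w = (starRingEnd ℂ) z := by
    rw [hzdef, hwdef, ← Complex.exp_conj]
    congr 1
    simp [_root_.map_mul, Complex.conj_ofReal, Complex.conj_I]
  have hstep : ∀ i : Fin (m+5), (starRingEnd ℂ) (v i) * (Ahat (m+5) κ1 κ2 ξ *ᵥ v) i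
      = (fun n : ℕ => (starRingEnd ℂ) (V n) *
      (2*((κ1:ℂ)+κ2) * V n + (-(κ1:ℂ)) * V ((n:ℤ)-1) + (-(κ1:ℂ)) * V ((n:ℤ)+1)
        + (-(κ2:ℂ)) * V ((n:ℤ)-2) + (-(κ2:ℂ)) * V ((n:ℤ)+2)
        + z * (if n = 0 then -(κ1:ℂ) * V ((m:ℤ)+4) + (-(κ2:ℂ)) * V ((m:ℤ)+3)
               else if n = 1 then -(κ2:ℂ) * V ((m:ℤ)+4) else 0)
        + w * (if n = m+4 then -(κ1:ℂ) * V 0 + (-(κ2:ℂ)) * V 1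
               else if n = m+3 then -(κ2:ℂ) * V 0 else 0))) (i : ℕ) := by
    intro i
    have hvi : V ((i:ℕ) : ℤ) = v i := by rw [hV, Vext_coe (m+5) v _ i.isLt]
    rw [row_formula (m+5) (by omega) κ1 κ2 ξ v i, ← hvi]
    simp only
    rw [show (((m+5:ℕ)):ℤ)-1 = (m:ℤ)+4 by push_cast; ring,
      show (((m+5:ℕ)):ℤ)-2 = (m:ℤ)+3 by push_cast; ring,
      show m+5-1 = m+4 from rfl, show m+5-2 = m+3 from rfl]
  rw [Finset.sum_congr rfl (fun i _ => hstep i),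
    Fin.sum_univ_eq_sum_range (fun n : ℕ => (starRingEnd ℂ) (V n) *
      (2*((κ1:ℂ)+κ2) * V n + (-(κ1:ℂ)) * V ((n:ℤ)-1) + (-(κ1:ℂ)) * V ((n:ℤ)+1)
        + (-(κ2:ℂ)) * V ((n:ℤ)-2) + (-(κ2:ℂ)) * V ((n:ℤ)+2)
        + z * (if n = 0 then -(κ1:ℂ) * V ((m:ℤ)+4) + (-(κ2:ℂ)) * V ((m:ℤ)+3)
               else if n = 1 then -(κ2:ℂ) * V ((m:ℤ)+4) else 0)
        + w * (if n = m+4 then -(κ1:ℂ) * V 0 + (-(κ2:ℂ)) * V 1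
               else if n = m+3 then -(κ2:ℂ) * V 0 else 0)) ) (m+5)]
  exact sum_identity m V (fun t ht => by rw [hV]; exact Vext_zero _ _ _ (by omega)) z w hzw hwz κ1 κ2

lemma kernel_const (m : ℕ) (κ1 κ2 : ℝ) (h1 : 0 < κ1) (h2 : 0 < κ1 + 4*κ2) (ξ : ℝ)
    (v : Fin (m+5) → ℂ) (hv : Ahat (m+5) κ1 κ2 ξ *ᵥ v = 0) :
    (∀ k : ℕ, k < m+5 → Vext (m+5) v (k:ℤ) = Vext (m+5) v 0) ∧
      Vext (m+5) v 0 = Complex.exp (-(ξ:ℂ)*Complex.I) * Vext (m+5) v ((m:ℤ)+4) := by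
  set V := Vext (m+5) v with hVdef
  set z := Complex.exp (-(ξ:ℂ)*Complex.I) with hzdef
  have hz1 : Complex.normSq z = 1 := by
    rw [hzdef, Complex.normSq_eq_norm_sq, Complex.norm_exp]
    simp
  have hQ0 : (∑ i : Fin (m+5), (starRingEnd ℂ) (v i) * (Ahat (m+5) κ1 κ2 ξ *ᵥ v) i) = 0 := by
    rw [hv]
    simp
  have hQ := quad_eq m κ1 κ2 ξ v
  rw [hQ0, ← hVdef, ← hzdef] at hQ
  -- real sums
  set s1 : ℝ := (∑ k ∈ Finset.range (m+4), Complex.normSq (V ((k:ℤ)+1) - V k))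
      + Complex.normSq (V 0 - z * V ((m:ℤ)+4)) with hs1def
  set s2 : ℝ := (∑ k ∈ Finset.range (m+3), Complex.normSq (V ((k:ℤ)+2) - V k))
      + Complex.normSq (V 0 - z * V ((m:ℤ)+3))
      + Complex.normSq (V 1 - z * V ((m:ℤ)+4)) with hs2def
  have hconv : ∀ x : ℂ, (starRingEnd ℂ) x * x = (Complex.normSq x : ℂ) :=
    fun x => Complex.normSq_eq_conj_mul_self.symm
  have hcast : κ1 * s1 + κ2 * s2 = 0 := by
    have hC : ((κ1 * s1 + κ2 * s2 : ℝ) : ℂ) = 0 := by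
      rw [hQ, hs1def, hs2def,
        Finset.sum_congr rfl (fun (k : ℕ) _ => hconv (V ((k:ℤ)+1) - V k)),
        Finset.sum_congr rfl (fun (k : ℕ) _ => hconv (V ((k:ℤ)+2) - V k)),
        hconv, hconv, hconv]
      push_cast
      ring
    exact_mod_cast hC
  have hterm : ∀ a b : ℂ, Complex.normSq (a+b) ≤ 2*(Complex.normSq a + Complex.normSq b) := by
    intro a b
    simp only [Complex.normSq_apply, Complex.add_re, Complex.add_im]
    nlinarith [sq_nonneg (a.re - b.re), sq_nonneg (a.im - b.im)]
  -- s2 ≤ 4 s1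
  have e2 : ∀ k:ℕ, Complex.normSq (V ((k:ℤ)+2) - V k)
      ≤ 2*(Complex.normSq (V ((k:ℤ)+1+1) - V ((k:ℤ)+1)) + Complex.normSq (V ((k:ℤ)+1) - V k)) := by
    intro k
    rw [show V ((k:ℤ)+2) - V k = (V ((k:ℤ)+1+1) - V ((k:ℤ)+1)) + (V ((k:ℤ)+1) - V k) by
      rw [show (k:ℤ)+1+1 = (k:ℤ)+2 by ring]; ring]
    exact hterm _ _
  have hsumle : (∑ k ∈ Finset.range (m+3), Complex.normSq (V ((k:ℤ)+2) - V k))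
      ≤ ∑ k ∈ Finset.range (m+3), (2*(Complex.normSq (V ((k:ℤ)+1+1) - V ((k:ℤ)+1))
          + Complex.normSq (V ((k:ℤ)+1) - V k))) :=
    Finset.sum_le_sum (fun k _ => e2 k)
  have hsplit : (∑ k ∈ Finset.range (m+3), (2*(Complex.normSq (V ((k:ℤ)+1+1) - V ((k:ℤ)+1))
          + Complex.normSq (V ((k:ℤ)+1) - V k))))
      = 2 * (∑ k ∈ Finset.range (m+3), Complex.normSq (V ((k:ℤ)+1+1) - V ((k:ℤ)+1)))
        + 2 * (∑ k ∈ Finset.range (m+3), Complex.normSq (V ((k:ℤ)+1) - V k)) := by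
    rw [Finset.mul_sum, Finset.mul_sum, ← Finset.sum_add_distrib]
    exact Finset.sum_congr rfl (fun k _ => by ring)
  have i1 : (∑ k ∈ Finset.range (m+4), Complex.normSq (V ((k:ℤ)+1) - V k))
      = (∑ k ∈ Finset.range (m+3), Complex.normSq (V ((k:ℤ)+1+1) - V ((k:ℤ)+1)))
        + Complex.normSq (V 1 - V 0) := by
    rw [show m+4 = (m+3)+1 from rfl, Finset.sum_range_succ',
      Finset.sum_congr rfl (fun (k:ℕ) (_ : k ∈ Finset.range (m+3)) => by
        rw [show ((k+1:ℕ):ℤ) = (k:ℤ)+1 by push_cast; ring])]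
    try norm_num
  have i2 : (∑ k ∈ Finset.range (m+4), Complex.normSq (V ((k:ℤ)+1) - V k))
      = (∑ k ∈ Finset.range (m+3), Complex.normSq (V ((k:ℤ)+1) - V k))
        + Complex.normSq (V ((m:ℤ)+4) - V ((m:ℤ)+3)) := by
    rw [show m+4 = (m+3)+1 from rfl, Finset.sum_range_succ,
      show ((m+3:ℕ):ℤ)+1 = (m:ℤ)+4 by push_cast; ring,
      show ((m+3:ℕ):ℤ) = (m:ℤ)+3 by push_cast; ring]
  have htB1 : Complex.normSq (V 0 - z * V ((m:ℤ)+3))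
      ≤ 2*(Complex.normSq (V 0 - z * V ((m:ℤ)+4)) + Complex.normSq (V ((m:ℤ)+4) - V ((m:ℤ)+3))) := by
    rw [show V 0 - z * V ((m:ℤ)+3) = (V 0 - z * V ((m:ℤ)+4)) + z * (V ((m:ℤ)+4) - V ((m:ℤ)+3)) by ring]
    calc Complex.normSq ((V 0 - z * V ((m:ℤ)+4)) + z * (V ((m:ℤ)+4) - V ((m:ℤ)+3)))
        ≤ 2*(Complex.normSq (V 0 - z * V ((m:ℤ)+4)) + Complex.normSq (z * (V ((m:ℤ)+4) - V ((m:ℤ)+3)))) :=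
          hterm _ _
      _ = 2*(Complex.normSq (V 0 - z * V ((m:ℤ)+4)) + Complex.normSq (V ((m:ℤ)+4) - V ((m:ℤ)+3))) := by
          rw [Complex.normSq_mul, hz1, one_mul]
  have htB2 : Complex.normSq (V 1 - z * V ((m:ℤ)+4))
      ≤ 2*(Complex.normSq (V 1 - V 0) + Complex.normSq (V 0 - z * V ((m:ℤ)+4))) := by
    rw [show V 1 - z * V ((m:ℤ)+4) = (V 1 - V 0) + (V 0 - z * V ((m:ℤ)+4)) by ring]
    exact hterm _ _
  have hb : s2 ≤ 4 * s1 := by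
    rw [hs1def, hs2def]
    linarith [hsumle, hsplit, i1, i2, htB1, htB2]
  have hS4nn : (0:ℝ) ≤ ∑ k ∈ Finset.range (m+4), Complex.normSq (V ((k:ℤ)+1) - V k) :=
    Finset.sum_nonneg (fun _ _ => Complex.normSq_nonneg _)
  have hS3nn : (0:ℝ) ≤ ∑ k ∈ Finset.range (m+3), Complex.normSq (V ((k:ℤ)+2) - V k) :=
    Finset.sum_nonneg (fun _ _ => Complex.normSq_nonneg _)
  have hs1nn : 0 ≤ s1 := by
    rw [hs1def]; have := Complex.normSq_nonneg (V 0 - z * V ((m:ℤ)+4)); linarith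
  have hs2nn : 0 ≤ s2 := by
    rw [hs2def]
    have := Complex.normSq_nonneg (V 0 - z * V ((m:ℤ)+3))
    have := Complex.normSq_nonneg (V 1 - z * V ((m:ℤ)+4))
    linarith
  have hs1z : s1 = 0 := by
    rcases le_or_gt 0 κ2 with h | h
    · nlinarith
    · nlinarith
  have hsum0 : (∑ k ∈ Finset.range (m+4), Complex.normSq (V ((k:ℤ)+1) - V k)) = 0 ∧
      Complex.normSq (V 0 - z * V ((m:ℤ)+4)) = 0 := by
    have := Complex.normSq_nonneg (V 0 - z * V ((m:ℤ)+4))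
    rw [hs1def] at hs1z
    constructor <;> linarith
  have htw : V 0 = z * V ((m:ℤ)+4) := by
    have := Complex.normSq_eq_zero.mp hsum0.2
    exact sub_eq_zero.mp this
  have hdk : ∀ k : ℕ, k < m+4 → V ((k:ℤ)+1) = V (k:ℤ) := by
    intro k hk
    have h0 := (Finset.sum_eq_zero_iff_of_nonneg
      (fun (i:ℕ) _ => Complex.normSq_nonneg (V ((i:ℤ)+1) - V (i:ℤ)))).mp hsum0.1 k
      (Finset.mem_range.mpr hk)
    exact sub_eq_zero.mp (Complex.normSq_eq_zero.mp h0)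
  refine ⟨?_, htw⟩
  intro k
  induction k with
  | zero => intro _; norm_num
  | succ n ih =>
    intro hn
    rw [show ((n+1:ℕ):ℤ) = (n:ℤ)+1 by push_cast; ring, hdk n (by omega), ih (by omega)]

theorem Ahat_invertible_and_kernel (M : ℕ) (hM : 5 ≤ M) (κ1 κ2 : ℝ)
    (h1 : 0 < κ1) (h2 : 0 < κ1 + 4 * κ2) :
    (∀ ξ ∈ Set.Ioo (0 : ℝ) (2 * Real.pi), IsUnit (Ahat M κ1 κ2 ξ)) ∧
      (∀ v : Fin M → ℂ, (Ahat M κ1 κ2 (2 * Real.pi)) *ᵥ v = 0 ↔ ∃ c : ℂ, v = c • q1 M) := by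
  obtain ⟨m, rfl⟩ : ∃ m, M = m + 5 := ⟨M - 5, by omega⟩
  have h2' : 0 < κ1 + 4*κ2 := by linarith
  have hsqpos : 0 < Real.sqrt ((m+5:ℕ):ℝ) := Real.sqrt_pos.mpr (by push_cast; positivity)
  constructor
  · -- invertibility on (0, 2π)
    intro ξ hξ
    obtain ⟨hξ0, hξ2⟩ := hξ
    rw [Matrix.isUnit_iff_isUnit_det, isUnit_iff_ne_zero]
    intro hdet
    obtain ⟨v, hvne, hv0⟩ := Matrix.exists_mulVec_eq_zero_iff.mpr hdet
    obtain ⟨hconst, htw0⟩ := kernel_const m κ1 κ2 h1 h2' ξ v hv0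
    have hzne : Complex.exp (-(ξ:ℂ)*Complex.I) ≠ 1 := by
      intro h
      rw [Complex.exp_eq_one_iff] at h
      obtain ⟨n, hn⟩ := h
      have key : (-(ξ:ℂ)) * Complex.I = ((n:ℂ) * (2*(Real.pi:ℂ))) * Complex.I := by
        rw [hn]; ring
      have hcx : (-(ξ:ℂ)) = (n:ℂ) * (2*(Real.pi:ℂ)) :=
        mul_right_cancel₀ Complex.I_ne_zero key
      have hr : -ξ = (n:ℝ) * (2*Real.pi) := by exact_mod_cast hcx
      rcases le_or_gt 0 n with hn0 | hn0
      · have : (0:ℝ) ≤ (n:ℝ) := by exact_mod_cast hn0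
        nlinarith [Real.pi_pos]
      · have hn1 : n ≤ -1 := by omega
        have : (n:ℝ) ≤ -1 := by exact_mod_cast hn1
        nlinarith [Real.pi_pos]
    have hV00 : Vext (m+5) v 0 = 0 := by
      have hm4 : Vext (m+5) v ((m:ℤ)+4) = Vext (m+5) v 0 := by
        rw [show (m:ℤ)+4 = ((m+4:ℕ):ℤ) by push_cast; ring]
        exact hconst (m+4) (by omega)
      have hself := htw0
      rw [hm4] at hself
      have h5 : (1 - Complex.exp (-(ξ:ℂ)*Complex.I)) * Vext (m+5) v 0 = 0 := by
        linear_combination hself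
      rcases mul_eq_zero.mp h5 with h | h
      · exact absurd (sub_eq_zero.mp h).symm hzne
      · exact h
    apply hvne
    funext i
    have ei := Vext_coe (m+5) v i.val i.isLt
    rw [Fin.eta] at ei
    show v i = 0
    rw [← ei, hconst i.val i.isLt, hV00]
  · -- kernel at 2π
    have hz₁ : Complex.exp (-((2*Real.pi:ℝ):ℂ)*Complex.I) = 1 := by
      rw [Complex.exp_eq_one_iff]
      exact ⟨-1, by push_cast; ring⟩
    have hw₁ : Complex.exp (((2*Real.pi:ℝ):ℂ)*Complex.I) = 1 := by
      rw [Complex.exp_eq_one_iff]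
      exact ⟨1, by push_cast; ring⟩
    intro v
    constructor
    · intro hv
      obtain ⟨hconst, htw⟩ := kernel_const m κ1 κ2 h1 h2' (2*Real.pi) v hv
      refine ⟨v ⟨0, by omega⟩ * (Real.sqrt ((m+5:ℕ):ℝ) : ℝ), ?_⟩
      funext i
      have e0 := Vext_coe (m+5) v 0 (by omega)
      push_cast at e0
      have ei := Vext_coe (m+5) v i.val i.isLt
      rw [Fin.eta] at ei
      have hvi : v i = v ⟨0, by omega⟩ := by
        rw [← ei, hconst i.val i.isLt, e0]
      have hq : ((v ⟨0, by omega⟩ * (Real.sqrt ((m+5:ℕ):ℝ) : ℝ)) • q1 (m+5)) i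
          = v ⟨0, by omega⟩ := by
        show v ⟨0, _⟩ * ↑(Real.sqrt ((m+5:ℕ):ℝ)) * ↑((1 / Real.sqrt ((m+5:ℕ)) : ℝ)) = _
        rw [mul_assoc, ← Complex.ofReal_mul,
          show Real.sqrt ((m+5:ℕ):ℝ) * ((1 / Real.sqrt ((m+5:ℕ)) : ℝ)) = 1 by
            field_simp]
        simp
      exact hvi.trans hq.symm
    · rintro ⟨c, rfl⟩
      funext i
      show (Ahat (m+5) κ1 κ2 (2*Real.pi) *ᵥ (c • q1 (m+5))) i = 0
      rw [row_formula (m+5) (by omega) κ1 κ2 (2*Real.pi) _ i]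
      have hin : ∀ t : ℤ, 0 ≤ t → t < ((m+5:ℕ):ℤ) →
          Vext (m+5) (c • q1 (m+5)) t = c * ((1 / Real.sqrt ((m+5:ℕ)) : ℝ):ℂ) := by
        intro t ht1 ht2
        simp only [Vext]
        rw [dif_pos ⟨ht1, ht2⟩]
        simp [q1]
      have hout : ∀ t : ℤ, t < 0 ∨ ((m+5:ℕ):ℤ) ≤ t → Vext (m+5) (c • q1 (m+5)) t = 0 :=
        fun t ht => Vext_zero (m+5) _ t ht
      have hi5 := i.isLt
      rw [hz₁, hw₁]
      by_cases hc0 : (i:ℕ) = 0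
      · have hiz : ((i:ℕ):ℤ) = 0 := by omega
        rw [hiz, if_pos hc0, if_neg (by omega), if_neg (by omega)]
        rw [hin 0 (by norm_num) (by push_cast; omega),
          hout (0-1) (by norm_num), hin (0+1) (by norm_num) (by push_cast; omega),
          hout (0-2) (by norm_num), hin (0+2) (by norm_num) (by push_cast; omega),
          hin (((m+5:ℕ):ℤ)-1) (by push_cast; omega) (by push_cast; omega),
          hin (((m+5:ℕ):ℤ)-2) (by push_cast; omega) (by push_cast; omega)]
        ring
      · by_cases hc1 : (i:ℕ) = 1
        · have hiz : ((i:ℕ):ℤ) = 1 := by omega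
          rw [hiz, if_neg hc0, if_pos hc1, if_neg (by omega), if_neg (by omega)]
          rw [hin 1 (by norm_num) (by push_cast; omega),
            hin (1-1) (by norm_num) (by push_cast; omega),
            hin (1+1) (by norm_num) (by push_cast; omega),
            hout (1-2) (by norm_num),
            hin (1+2) (by norm_num) (by push_cast; omega),
            hin (((m+5:ℕ):ℤ)-1) (by push_cast; omega) (by push_cast; omega)]
          ring
        · by_cases hc4 : (i:ℕ) = m+4
          · have hiz : ((i:ℕ):ℤ) = (m:ℤ)+4 := by omega
            rw [hiz, if_neg hc0, if_neg hc1,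
              if_pos (show (i:ℕ) = m+5-1 by omega)]
            rw [hin ((m:ℤ)+4) (by omega) (by push_cast; omega),
              hin ((m:ℤ)+4-1) (by omega) (by push_cast; omega),
              hout ((m:ℤ)+4+1) (by right; push_cast; omega),
              hin ((m:ℤ)+4-2) (by omega) (by push_cast; omega),
              hout ((m:ℤ)+4+2) (by right; push_cast; omega),
              hin 0 (by norm_num) (by push_cast; omega),
              hin 1 (by norm_num) (by push_cast; omega)]
            ring
          · by_cases hc3 : (i:ℕ) = m+3
            · have hiz : ((i:ℕ):ℤ) = (m:ℤ)+3 := by omega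
              rw [hiz, if_neg hc0, if_neg hc1, if_neg (by omega),
                if_pos (show (i:ℕ) = m+5-2 by omega)]
              rw [hin ((m:ℤ)+3) (by omega) (by push_cast; omega),
                hin ((m:ℤ)+3-1) (by omega) (by push_cast; omega),
                hin ((m:ℤ)+3+1) (by omega) (by push_cast; omega),
                hin ((m:ℤ)+3-2) (by omega) (by push_cast; omega),
                hout ((m:ℤ)+3+2) (by right; push_cast; omega),
                hin 0 (by norm_num) (by push_cast; omega)]
              ring
            · rw [if_neg hc0, if_neg hc1, if_neg (by omega), if_neg (by omega)]
              rw [hin ((i:ℕ):ℤ) (by omega) (by push_cast; omega),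
                hin (((i:ℕ):ℤ)-1) (by omega) (by push_cast; omega),
                hin (((i:ℕ):ℤ)+1) (by omega) (by push_cast; omega),
                hin (((i:ℕ):ℤ)-2) (by omega) (by push_cast; omega),
                hin (((i:ℕ):ℤ)+2) (by omega) (by push_cast; omega)]
              ring
end
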